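/- Every Brane Calculus system admits a normal form: for all systems P there exists a system in normal form Q (i.e., Q = n₁·σ₁(|Q₁|) ∘ … ∘ n_k·σ_k(|Q_k|) with k ≥ 0, each Q_i itself in normal form, and σ_i(|Q_i|) ≢ σ_j(|Q_j|) for i ≠ j) such that the unfolding ⌈Q⌉ is structurally congruent to P. -/

import Mathlib

open MeasureTheory
open scoped ENNReal

namespace Brane

/-- Action names Λ (a countable set). -/
abbrev Name := ℕ
/-- Node names (for compartments), a countable set disjoint from Λ. -/
abbrev NName := ℕ

/-- Membranes of the Brane Calculus. -/
inductive Membrane : Type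
  | zero : Membrane
  | par : Membrane → Membrane → Membrane
  | phago : Name → Membrane → Membrane
  | cophago : Name → Membrane → Membrane → Membrane  -- cophago n τ σ = ⊥phago_n(τ).σ
  | exo : Name → Membrane → Membrane
  | coexo : Name → Membrane → Membrane
  | pino : Name → Membrane → Membrane → Membrane     -- pino n τ σ = pino_n(τ).σ
deriving DecidableEq

/-- Systems of the Brane Calculus. -/
inductive System : Type
  | void : System
  | comp : System → System → System
  | cell : Membrane → System → System
deriving DecidableEq

/-- Structural congruence on membranes. -/
inductive MCong : Membrane → Membrane → Prop
  | refl (σ) : MCong σ σ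
  | symm {σ τ} : MCong σ τ → MCong τ σ
  | trans {σ τ ρ} : MCong σ τ → MCong τ ρ → MCong σ ρ
  | parComm (σ τ) : MCong (Membrane.par σ τ) (Membrane.par τ σ)
  | parAssoc (σ τ ρ) : MCong (Membrane.par σ (Membrane.par τ ρ)) (Membrane.par (Membrane.par σ τ) ρ)
  | parZero (σ) : MCong (Membrane.par σ .zero) σ
  | par {σ τ} (ρ) : MCong σ τ → MCong (Membrane.par σ ρ) (Membrane.par τ ρ)
  | phago (n) {σ τ} : MCong σ τ → MCong (.phago n σ) (.phago n τ)
  | exo (n) {σ τ} : MCong σ τ → MCong (.exo n σ) (.exo n τ)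
  | coexo (n) {σ τ} : MCong σ τ → MCong (.coexo n σ) (.coexo n τ)
  | cophago (n) {ρ ν σ τ} : MCong ρ ν → MCong σ τ → MCong (.cophago n ρ σ) (.cophago n ν τ)
  | pino (n) {ρ ν σ τ} : MCong ρ ν → MCong σ τ → MCong (.pino n ρ σ) (.pino n ν τ)

/-- Structural congruence on systems. -/
inductive SCong : System → System → Prop
  | refl (P) : SCong P P
  | symm {P Q} : SCong P Q → SCong Q P
  | trans {P Q R} : SCong P Q → SCong Q R → SCong P R
  | compComm (P Q) : SCong (System.comp P Q) (System.comp Q P)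
  | compAssoc (P Q R) : SCong (System.comp P (System.comp Q R)) (System.comp (System.comp P Q) R)
  | compVoid (P) : SCong (System.comp P .void) P
  | zeroVoid : SCong (System.cell .zero .void) .void
  | comp {P Q} (R) : SCong P Q → SCong (System.comp P R) (System.comp Q R)
  | cell {σ τ P Q} : MCong σ τ → SCong P Q → SCong (.cell σ P) (.cell τ Q)

/-- ≡-equivalence class of a membrane. -/
def mcls (σ : Membrane) : Set Membrane := {τ | MCong σ τ}
/-- ≡-equivalence class of a system. -/
def scls (P : System) : Set System := {Q | SCong P Q}

/-- The σ-algebra Π on membranes, generated by the ≡-classes. -/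
instance : MeasurableSpace Membrane := .generateFrom {S | ∃ σ, S = mcls σ}
/-- The σ-algebra Π on systems, generated by the ≡-classes. -/
instance : MeasurableSpace System := .generateFrom {S | ∃ P, S = scls P}

/-- The reduction relation of the Brane Calculus. -/
inductive React : System → System → Prop
  | phago {n ρ τ τ₀ σ σ₀ P Q} :
      React (.comp (.cell ((Membrane.cophago n ρ τ).par τ₀) Q)
                   (.cell ((Membrane.phago n σ).par σ₀) P))
            (.cell (Membrane.par τ τ₀) (.comp (.cell ρ (.cell (Membrane.par σ σ₀) P)) Q))
  | exo {n τ τ₀ σ σ₀ P Q} :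
      React (.cell ((Membrane.coexo n τ).par τ₀)
                   (.comp (.cell ((Membrane.exo n σ).par σ₀) P) Q))
            (.comp (.cell (Membrane.par (Membrane.par σ σ₀) (Membrane.par τ τ₀)) Q) P)
  | pino {n ρ σ σ₀ P} :
      React (.cell ((Membrane.pino n ρ σ).par σ₀) P)
            (.cell (Membrane.par σ σ₀) (.comp (.cell ρ .void) P))
  | loc {P Q} (σ) : React P Q → React (.cell σ P) (.cell σ Q)
  | comp {P Q} (R) : React P Q → React (.comp P R) (.comp Q R)
  | equiv {P P' Q Q'} : SCong P P' → React P' Q' → SCong Q' Q → React P Q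

/-- Membrane action labels A_mem. -/
inductive MLabel : Type
  | phago : Name → MLabel
  | exo : Name → MLabel
  | coexo : Name → MLabel
  | cophago : Name → MLabel
  | pino : Name → MLabel
deriving DecidableEq

/-- System action labels A_sys. -/
inductive SLabel : Type
  | id : SLabel
  | ph : Name → SLabel
  | phB : Name → SLabel
  | ex : Name → SLabel
deriving DecidableEq

/-- Target (product) space of a membrane label, according to its arity. -/
def MLabel.T : MLabel → Type
  | .phago _ => Membrane
  | .exo _ => Membrane
  | .coexo _ => Membrane
  | .cophago _ => Membrane × Membrane
  | .pino _ => Membrane × Membrane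

/-- Target (product) space of a system label, according to its arity. -/
def SLabel.T : SLabel → Type
  | .id => System
  | .ph _ => System × System
  | .phB _ => Membrane × Membrane × System × System
  | .ex _ => Membrane × System × System

instance (a : MLabel) : MeasurableSpace a.T := by
  cases a <;> (dsimp [MLabel.T]; infer_instance)

instance (a : SLabel) : MeasurableSpace a.T := by
  cases a <;> (dsimp [SLabel.T]; infer_instance)

/-- A_mem-indexed families of measures Δ^{A_mem}(B,Π). -/
abbrev MMeas := ∀ a : MLabel, Measure a.T
/-- A_sys-indexed families of measures Δ^{A_sys}(B,Π). -/
abbrev SMeas := ∀ a : SLabel, Measure a.T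

/-- Prefix constant [phago_n]_σ. -/
noncomputable def phagoMeas (ι : Name → ℝ≥0∞) (n : Name) (σ : Membrane) : MMeas
  | .phago m => if n = m then ι n • Measure.dirac σ else 0
  | .exo _ => 0
  | .coexo _ => 0
  | .cophago _ => 0
  | .pino _ => 0

/-- Prefix constant [exo_n]_σ. -/
noncomputable def exoMeas (ι : Name → ℝ≥0∞) (n : Name) (σ : Membrane) : MMeas
  | .exo m => if n = m then ι n • Measure.dirac σ else 0
  | .phago _ => 0
  | .coexo _ => 0
  | .cophago _ => 0
  | .pino _ => 0

/-- Prefix constant [coexo_n]_σ. -/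
noncomputable def coexoMeas (ι : Name → ℝ≥0∞) (n : Name) (σ : Membrane) : MMeas
  | .coexo m => if n = m then ι n • Measure.dirac σ else 0
  | .phago _ => 0
  | .exo _ => 0
  | .cophago _ => 0
  | .pino _ => 0

/-- Prefix constant [cophago_n]_σ^τ. -/
noncomputable def cophagoMeas (ι : Name → ℝ≥0∞) (n : Name) (τ σ : Membrane) : MMeas
  | .cophago m => if n = m then ι n • Measure.dirac (σ, τ) else 0
  | .phago _ => 0
  | .exo _ => 0
  | .coexo _ => 0
  | .pino _ => 0

/-- Prefix constant [pino_n]_σ^τ. -/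
noncomputable def pinoMeas (ι : Name → ℝ≥0∞) (n : Name) (τ σ : Membrane) : MMeas
  | .pino m => if n = m then ι n • Measure.dirac (σ, τ) else 0
  | .phago _ => 0
  | .exo _ => 0
  | .coexo _ => 0
  | .cophago _ => 0

/-- The parallel operator μ ⊕_{σ,τ} μ' on A_mem-indexed families of measures. -/
noncomputable def mpar (μ μ' : MMeas) (σ τ : Membrane) : MMeas
  | .phago n => (μ (.phago n)).map (fun ρ => ρ.par τ) + (μ' (.phago n)).map (fun ρ => ρ.par σ)
  | .exo n => (μ (.exo n)).map (fun ρ => ρ.par τ) + (μ' (.exo n)).map (fun ρ => ρ.par σ)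
  | .coexo n => (μ (.coexo n)).map (fun ρ => ρ.par τ) + (μ' (.coexo n)).map (fun ρ => ρ.par σ)
  | .cophago n =>
      (μ (.cophago n)).map (fun p : Membrane × Membrane => (p.1.par τ, p.2)) +
      (μ' (.cophago n)).map (fun p : Membrane × Membrane => (p.1.par σ, p.2))
  | .pino n =>
      (μ (.pino n)).map (fun p : Membrane × Membrane => (p.1.par τ, p.2)) +
      (μ' (.pino n)).map (fun p : Membrane × Membrane => (p.1.par σ, p.2))

/-- The nesting operator μ ▹_{σ,P} ν on families of measures. -/
noncomputable def mnest (ι : Name → ℝ≥0∞) (μ : SMeas) (ν : MMeas) (σ : Membrane) (P : System) :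
    SMeas
  | .ph n => (ν (.phago n) (mcls σ)) • Measure.dirac (System.cell σ P, System.void)
  | .phB n =>
      ((ν (.cophago n)).prod (Measure.dirac (P, System.void))).map MeasurableEquiv.prodAssoc
  | .ex n => (ν (.exo n)).prod (Measure.dirac (P, System.void))
  | .id =>
      (μ .id).map (fun Q => System.cell σ Q) +
      Measure.sum (fun n : Name =>
        (ν (.pino n)).map (fun p : Membrane × Membrane =>
          System.cell p.1 ((System.cell p.2 System.void).comp P))) +
      Measure.sum (fun n : Name =>
        (ι n)⁻¹ •
          (((μ (.ex n)).prod (ν (.coexo n))).map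
            (fun q : (Membrane × System × System) × Membrane =>
              (System.cell (q.1.1.par q.2) q.1.2.2).comp q.1.2.1)))

/-- The composition operator μ ⊗_{P,Q} μ' on families of measures. -/
noncomputable def mcomp (ι : Name → ℝ≥0∞) (μ μ' : SMeas) (P Q : System) : SMeas
  | .ph n =>
      (μ (.ph n)).map (fun p : System × System => (p.1, p.2.comp Q)) +
      (μ' (.ph n)).map (fun p : System × System => (p.1, p.2.comp P))
  | .phB n =>
      (μ (.phB n)).map
        (fun p : Membrane × Membrane × System × System => (p.1, p.2.1, p.2.2.1, p.2.2.2.comp Q)) +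
      (μ' (.phB n)).map
        (fun p : Membrane × Membrane × System × System => (p.1, p.2.1, p.2.2.1, p.2.2.2.comp P))
  | .ex n =>
      (μ (.ex n)).map (fun p : Membrane × System × System => (p.1, p.2.1, p.2.2.comp Q)) +
      (μ' (.ex n)).map (fun p : Membrane × System × System => (p.1, p.2.1, p.2.2.comp P))
  | .id =>
      (μ .id).map (fun R => R.comp Q) + (μ' .id).map (fun R => R.comp P) +
      Measure.sum (fun n : Name =>
        (ι n)⁻¹ •
          (((μ (.ph n)).prod (μ' (.phB n))).map
            (fun q : (System × System) × (Membrane × Membrane × System × System) =>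
              (System.cell q.2.1 ((System.cell q.2.2.1 q.1.1).comp q.2.2.2.1)).comp
                (q.1.2.comp q.2.2.2.2)))) +
      Measure.sum (fun n : Name =>
        (ι n)⁻¹ •
          (((μ (.phB n)).prod (μ' (.ph n))).map
            (fun q : (Membrane × Membrane × System × System) × (System × System) =>
              (System.cell q.1.1 ((System.cell q.1.2.1 q.2.1).comp q.1.2.2.1)).comp
                (q.1.2.2.2.comp q.2.2))))

/-- The stochastic transition relation σ →_mem μ, given by the SOS rules
(zero), (pref), (pref-arg), (par). -/
inductive MTrans (ι : Name → ℝ≥0∞) : Membrane → MMeas → Prop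
  | zero : MTrans ι .zero 0
  | phago {n σ} : MTrans ι (.phago n σ) (phagoMeas ι n σ)
  | exo {n σ} : MTrans ι (.exo n σ) (exoMeas ι n σ)
  | coexo {n σ} : MTrans ι (.coexo n σ) (coexoMeas ι n σ)
  | cophago {n τ σ} : MTrans ι (.cophago n τ σ) (cophagoMeas ι n τ σ)
  | pino {n τ σ} : MTrans ι (.pino n τ σ) (pinoMeas ι n τ σ)
  | par {σ τ μ μ'} : MTrans ι σ μ → MTrans ι τ μ' → MTrans ι (Membrane.par σ τ) (mpar μ μ' σ τ)

/-- The stochastic transition relation P →_sys μ, given by the SOS rules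
(void), (loc), (comp). -/
inductive STrans (ι : Name → ℝ≥0∞) : System → SMeas → Prop
  | void : STrans ι .void 0
  | cell {σ P ν μ} : MTrans ι σ ν → STrans ι P μ → STrans ι (.cell σ P) (mnest ι μ ν σ P)
  | comp {P Q μ μ'} : STrans ι P μ → STrans ι Q μ' → STrans ι (System.comp P Q) (mcomp ι μ μ' P Q)

end Brane
namespace Brane

/-! ### Normal forms -/

/-- Compose `n` copies of `C` in front of `R`. -/
def prependCopies : ℕ → System → System → System
  | 0, _, R => R
  | n + 1, C, R => System.comp C (prependCopies n C R)

/-- `n` copies of `C` composed in parallel. -/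
def copies (n : ℕ) (C : System) : System := prependCopies n C .void

/-- Systems in normal form: n₁·σ₁(|Q₁|) ∘ … ∘ n_k·σ_k(|Q_k|). -/
inductive NF : Type
  | nil : NF
  | cons (n : ℕ) (σ : Membrane) (inner rest : NF) : NF

/-- Unfolding ⌈Q⌉ of a normal form into a system. -/
def NF.unfold : NF → System
  | .nil => .void
  | .cons n σ Q₁ Q₂ => prependCopies n (System.cell σ Q₁.unfold) Q₂.unfold

/-- The list of top-level cells of a normal form. -/
def NF.cellsList : NF → List (Membrane × NF)
  | .nil => []
  | .cons _ σ Q₁ Q₂ => (σ, Q₁) :: Q₂.cellsList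

/-- Well-formedness of normal forms: positive multiplicities, subsystems in
normal form, and pairwise non-congruent top-level cells. -/
inductive NF.Good : NF → Prop
  | nil : Good .nil
  | cons {n σ Q₁ Q₂} : 0 < n → Good Q₁ → Good Q₂ →
      (∀ p ∈ Q₂.cellsList, ¬ SCong (System.cell σ Q₁.unfold) (System.cell p.1 p.2.unfold)) →
      Good (.cons n σ Q₁ Q₂)

/-! ### Species -/

/-- Actions (prefix-headed membranes). -/
inductive Action : Type
  | phago : Name → Membrane → Action
  | cophago : Name → Membrane → Membrane → Action
  | exo : Name → Membrane → Action
  | coexo : Name → Membrane → Action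
  | pino : Name → Membrane → Membrane → Action
deriving DecidableEq

/-- The membrane denoted by an action. -/
def Action.toMem : Action → Membrane
  | .phago n σ => .phago n σ
  | .cophago n ρ σ => .cophago n ρ σ
  | .exo n σ => .exo n σ
  | .coexo n σ => .coexo n σ
  | .pino n ρ σ => .pino n ρ σ

/-- A species C(|^x_y|) : a complex located in compartment x with inner compartment y. -/
structure Species : Type where
  C : Finset Action
  x : NName
  y : NName
deriving DecidableEq

/-- Populations: finite multisets of species. -/
abbrev Population := Species →₀ ℕ

/-- Node names occurring in a population. -/
def pfnPop (S : Population) : Finset NName := S.support.biUnion fun I => {I.x, I.y}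

/-- The function s(·) mapping a membrane to a complex. -/
def complexOf : Membrane → Finset Action
  | .zero => ∅
  | .par σ τ => complexOf σ ∪ complexOf τ
  | .phago n σ => {Action.phago n σ}
  | .cophago n ρ σ => {Action.cophago n ρ σ}
  | .exo n σ => {Action.exo n σ}
  | .coexo n σ => {Action.coexo n σ}
  | .pino n ρ σ => {Action.pino n ρ σ}

/-- The translation species_{E,x}(Q) of a normal form into a species population
(relational because of the choice of fresh names). -/
inductive NFSpecies : Finset NName → NName → NF → Population → Prop
  | nil {E x} : NFSpecies E x .nil 0
  | cons {E : Finset NName} {x : NName} {n σ Q₁ Q₂ y J₁ J₂} :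
      y ∉ E →
      NFSpecies (insert y E) y Q₁ J₁ →
      NFSpecies E x Q₂ J₂ →
      (pfnPop J₁ ∩ pfnPop J₂ ⊆ {x}) →
      NFSpecies E x (.cons n σ Q₁ Q₂)
        (Finsupp.single ⟨complexOf σ, x, y⟩ n + J₁ + J₂)

/-- species_{∅,x}(P): translation of a system `P` (via a normal form of `P`)
into a species population located at `x`. -/
def SpeciesOfSys (x : NName) (P : System) (J : Population) : Prop :=
  ∃ Q : NF, NF.Good Q ∧ SCong Q.unfold P ∧ NFSpecies {x} x Q J

/-- A root name of a species population. -/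
def IsRoot (S : Population) (x : NName) : Prop :=
  (∃ I ∈ S.support, I.x = x) ∧ ∀ I ∈ S.support, I.y ≠ x

/-! ### Decoding -/

/-- Decoding ⟪C⟫ of a complex into a membrane. -/
noncomputable def decodeComplex (C : Finset Action) : Membrane :=
  (C.toList.map Action.toMem).foldr Membrane.par .zero

/-- The species of `S` located at `x`. -/
def speciesAt (S : Population) (x : NName) : Finset Species :=
  S.support.filter fun I => I.x = x

mutual
/-- Decoding ⟪S⟫_x of a species population into a system (relational; it is
defined exactly when the nesting structure of `S` below `x` is well founded). -/
inductive Decodes : Population → NName → System → Prop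
  | mk {S : Population} {x : NName} {l : List Species} {P : System} :
      l.Perm (speciesAt S x).toList → DecList S l P → Decodes S x P

/-- Decoding of a list of species (one top-level compartment each). -/
inductive DecList : Population → List Species → System → Prop
  | nil {S} : DecList S [] .void
  | cons {S : Population} {I : Species} {l : List Species} {P' Q : System} :
      Decodes S I.y P' → DecList S l Q →
      DecList S (I :: l)
        (System.comp (copies (S I) (System.cell (decodeComplex I.C) P')) Q)
end

end Brane
namespace Brane

/-! ### The COW Generic Stochastic Abstract Machine (Brane Calculus instance) -/

/-- A reaction O = (S₁, r, f, S₂); the global update function f is, in the Brane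
Calculus instantiation, either the identity (`none`) or a substitution of node
names T[w := x] (`some (w, x)`). -/
structure Reaction : Type where
  reac : Population
  rate : ℝ≥0∞
  upd : Option (NName × NName)
  prod : Population

/-- An activity: the scheduled time t' and the propensity a of a reaction. -/
abbrev Activity := ℝ × ℝ≥0∞

/-- The reaction map R, associating activities to reactions. -/
abbrev RMap := List (Reaction × Activity)

/-- A machine term E ⊢ (t, S, R). -/
structure MachTerm : Type where
  env : Finset NName
  time : ℝ
  pop : Population
  rxns : RMap

/-- A machine state (t, S, R). -/
abbrev MState := ℝ × Population × RMap

/-- S*(I): population of a species multiplied along the chain of enclosing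
compartments up to the root. -/
inductive StarPop (S : Population) : Species → ℕ → Prop
  | root {I} : (∀ J ∈ S.support, J.y ≠ I.x) → StarPop S I (S I)
  | step {I J m} : J ∈ S.support → J.y = I.x → StarPop S J m → StarPop S I (S I * m)

/-- The mass-action propensity of a reaction in population `S`. -/
def PropensityIs (O : Reaction) (S : Population) (a : ℝ≥0∞) : Prop :=
  ∃ g : Species → ℕ,
    (∀ I ∈ O.reac.support, StarPop S I (g I)) ∧
    a = O.rate * ∏ I ∈ O.reac.support, ((g I).choose (O.reac I) : ℝ≥0∞)

/-- init(L,(t,S,R)): schedule each reaction of `L` with its propensity in `S`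
and a stochastic delay. -/
def InitRel (t : ℝ) (S : Population) (L : List Reaction) (out : RMap) : Prop :=
  List.Forall₂
    (fun O q => q.1 = O ∧ PropensityIs O S q.2.2 ∧ ∃ d : ℝ, 0 ≤ d ∧ q.2.1 = t + d) L out

/-- updates(I,(t,S,R)): recompute the activities of the reactions involving `I`. -/
def UpdatesSpec (Iu : Species) (t : ℝ) (S : Population) (R out : RMap) : Prop :=
  List.Forall₂
    (fun p q => q.1 = p.1 ∧ PropensityIs p.1 S q.2.2 ∧
      (if t < p.2.1 then q.2.1 = t + ((p.2.2 / q.2.2).toReal) * (p.2.1 - t)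
       else ∃ d : ℝ, 0 ≤ d ∧ q.2.1 = t + d))
    (R.filter fun p => decide (0 < p.1.reac Iu)) out

open Classical in
/-- Right-biased union R ∪ R' of reaction maps. -/
noncomputable def override (R R' : RMap) : RMap :=
  R' ++ R.filter fun p => decide (∀ q ∈ R', q.1 ≠ p.1)

/-- The reactions of the Brane Calculus instantiation: unary pinocytosis and
binary exocytosis/phagocytosis reactions of the (new) species `I₁` against the
population `S`, with rates given by ι. -/
inductive ReactionOf (ι : Name → ℝ≥0∞) (E : Finset NName) (I₁ : Species) (S : Population) :
    Reaction → Prop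
  | pino {n ρ σ w} :
      Action.pino n ρ σ ∈ I₁.C → w ∉ E →
      ReactionOf ι E I₁ S
        ⟨Finsupp.single I₁ 1, ι n, none,
          Finsupp.single ⟨complexOf σ ∪ I₁.C.erase (.pino n ρ σ), I₁.x, I₁.y⟩ 1 +
          Finsupp.single ⟨complexOf ρ, I₁.y, w⟩ 1⟩
  | exoUp {n τ σ I₂} :
      I₂ ∈ S.support → Action.coexo n τ ∈ I₁.C → Action.exo n σ ∈ I₂.C → I₂.x = I₁.y →
      ReactionOf ι E I₁ S
        ⟨Finsupp.single I₁ 1 + Finsupp.single I₂ 1, ι n, some (I₂.y, I₁.x),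
          Finsupp.single
            ⟨(complexOf τ ∪ I₁.C.erase (.coexo n τ)) ∪ (complexOf σ ∪ I₂.C.erase (.exo n σ)),
              I₁.x, I₁.y⟩ 1⟩
  | exoDown {n τ σ I₂} :
      I₂ ∈ S.support → Action.coexo n τ ∈ I₂.C → Action.exo n σ ∈ I₁.C → I₁.x = I₂.y →
      ReactionOf ι E I₁ S
        ⟨Finsupp.single I₁ 1 + Finsupp.single I₂ 1, ι n, some (I₁.y, I₂.x),
          Finsupp.single
            ⟨(complexOf τ ∪ I₂.C.erase (.coexo n τ)) ∪ (complexOf σ ∪ I₁.C.erase (.exo n σ)),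
              I₂.x, I₂.y⟩ 1⟩
  | phagoL {n ρ τ σ I₂ w} :
      I₂ ∈ S.support → Action.cophago n ρ τ ∈ I₁.C → Action.phago n σ ∈ I₂.C →
      I₂.x = I₁.x → w ∉ E →
      ReactionOf ι E I₁ S
        ⟨Finsupp.single I₁ 1 + Finsupp.single I₂ 1, ι n, none,
          Finsupp.single ⟨complexOf τ ∪ I₁.C.erase (.cophago n ρ τ), I₁.x, I₁.y⟩ 1 +
          Finsupp.single ⟨complexOf ρ, I₁.y, w⟩ 1 +
          Finsupp.single ⟨complexOf σ ∪ I₂.C.erase (.phago n σ), w, I₂.y⟩ 1⟩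
  | phagoR {n ρ τ σ I₂ w} :
      I₂ ∈ S.support → Action.cophago n ρ τ ∈ I₂.C → Action.phago n σ ∈ I₁.C →
      I₂.x = I₁.x → w ∉ E →
      ReactionOf ι E I₁ S
        ⟨Finsupp.single I₁ 1 + Finsupp.single I₂ 1, ι n, none,
          Finsupp.single ⟨complexOf τ ∪ I₂.C.erase (.cophago n ρ τ), I₂.x, I₂.y⟩ 1 +
          Finsupp.single ⟨complexOf ρ, I₂.y, w⟩ 1 +
          Finsupp.single ⟨complexOf σ ∪ I₁.C.erase (.phago n σ), w, I₁.y⟩ 1⟩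

/-- `L` is (a representative listing of) reactions(I ↦ i, S). -/
def ReactionsSpec (ι : Name → ℝ≥0∞) (E : Finset NName) (I : Species) (S : Population)
    (L : List Reaction) : Prop :=
  (∀ O ∈ L, ReactionOf ι E I S O) ∧
  (∀ O, ReactionOf ι E I S O → ∃ O' ∈ L, O'.reac = O.reac ∧ O'.rate = O.rate)

/-- The operation I ↦ i ⊕ (t, S, R). -/
inductive OPlusOne (ι : Name → ℝ≥0∞) (E : Finset NName) : Species → ℕ → MState → MState → Prop
  | old {I : Species} {i : ℕ} {t S R out} :
      I ∈ S.support →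
      UpdatesSpec I t (S + Finsupp.single I i) R out →
      OPlusOne ι E I i (t, S, R) (t, S + Finsupp.single I i, override R out)
  | new {I : Species} {i : ℕ} {t S R L out} :
      I ∉ S.support →
      ReactionsSpec ι E I S L →
      InitRel t (S + Finsupp.single I i) L out →
      OPlusOne ι E I i (t, S, R) (t, S + Finsupp.single I i, R ++ out)

/-- The operation (t, S, R) ⊖ I ↦ i. -/
inductive OMinusOne : Species → ℕ → MState → MState → Prop
  | mk {I : Species} {i : ℕ} {t S R out} :
      i ≤ S I →
      UpdatesSpec I t (Finsupp.update S I (S I - i)) R out →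
      OMinusOne I i (t, S, R) (t, Finsupp.update S I (S I - i), override R out)

/-- Iterated ⊕ of a population listed as (species, multiplicity) pairs. -/
inductive OPlusStar (ι : Name → ℝ≥0∞) (E : Finset NName) :
    List (Species × ℕ) → MState → MState → Prop
  | nil {st} : OPlusStar ι E [] st st
  | cons {I i l st st' st''} :
      OPlusOne ι E I i st st' → OPlusStar ι E l st' st'' →
      OPlusStar ι E ((I, i) :: l) st st''

/-- Iterated ⊖ of a population listed as (species, multiplicity) pairs. -/
inductive OMinusStar : List (Species × ℕ) → MState → MState → Prop
  | nil {st} : OMinusStar [] st st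
  | cons {I i l st st' st''} :
      OMinusOne I i st st' → OMinusStar l st' st'' →
      OMinusStar ((I, i) :: l) st st''

/-- List the species of a population together with their multiplicities. -/
noncomputable def popToList (S : Population) : List (Species × ℕ) :=
  S.support.toList.map fun I => (I, S I)

/-- `Reach S x z`: compartment `z` is (hereditarily) nested inside compartment `x`. -/
inductive Reach (S : Population) : NName → NName → Prop
  | refl (x) : Reach S x x
  | step {x : NName} {I : Species} : Reach S x I.x → I ∈ S.support → Reach S x I.y

open Classical in
/-- The copy (under the renaming `g`) of the subtree of `S` rooted at `y`. -/
noncomputable def copySub (g : NName → NName) (S : Population) (y : NName) : Population :=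
  S.sum fun I n => if Reach S y I.x then Finsupp.single ⟨I.C, g I.x, g I.y⟩ n else 0

/-- dup(E ⊢ (t,S,R), y, y'): deep duplication of the subtree rooted at `y` as a
new subtree rooted at `y'`, initializing the reactions of the new species. -/
def DupRel (ι : Name → ℝ≥0∞) (E : Finset NName) (t : ℝ) (S : Population) (R : RMap)
    (y y' : NName) (E' : Finset NName) (S' : Population) (R' : RMap) : Prop :=
  ∃ g : NName → NName,
    g y = y' ∧
    (∀ z, Reach S y z → z ≠ y → g z ∉ E) ∧
    (∀ z w, Reach S y z → Reach S y w → g z = g w → z = w) ∧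
    S' = S + copySub g S y ∧
    E' = E ∪ pfnPop S' ∧
    ∃ L out,
      (∀ O ∈ L, ∃ I ∈ (copySub g S y).support, ReactionOf ι E' I S' O) ∧
      (∀ I ∈ (copySub g S y).support, ∀ O, ReactionOf ι E' I S' O →
        ∃ O' ∈ L, O'.reac = O.reac ∧ O'.rate = O.rate) ∧
      InitRel t S' L out ∧ R' = R ++ out

/-- Split the multiplicity of the species `I`, keeping `keep` instances with the
old inner name and giving the remaining instances a fresh inner name, and deep
copy the tree hanging below `I` for the new instances. -/
def SplitCopy (ι : Name → ℝ≥0∞) (m : MachTerm) (I : Species) (keep : ℕ) (fresh : NName)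
    (m' : MachTerm) : Prop :=
  fresh ∉ m.env ∧
  ∃ S₀ E' S' R',
    S₀ = Finsupp.update m.pop I keep + Finsupp.single ⟨I.C, I.x, fresh⟩ (m.pop I - keep) ∧
    DupRel ι (insert fresh m.env) m.time S₀ m.rxns I.y fresh E' S' R' ∧
    ∃ L out,
      ReactionsSpec ι E' ⟨I.C, I.x, fresh⟩ S₀ L ∧
      InitRel m.time S' L out ∧
      m' = ⟨E', m.time, S', R' ++ out⟩

/-- The parent-unfolding step of cow: if the compartment `y` lies inside a
compartment with multiplicity > 1, split off a private copy of the parent. -/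
def ParentSplit (ι : Name → ℝ≥0∞) (m : MachTerm) (y : NName) (m' : MachTerm) : Prop :=
  ((∀ Ip ∈ m.pop.support, Ip.y = y → m.pop Ip ≤ 1) ∧ m' = m) ∨
  (∃ Ip ∈ m.pop.support, Ip.y = y ∧ 1 < m.pop Ip ∧ ∃ y', SplitCopy ι m Ip 1 y' m')

/-- The cow step for a single reactant species `I` with multiplicity `j`. -/
def CowStep (ι : Name → ℝ≥0∞) (m : MachTerm) (Ij : Species × ℕ) (m' : MachTerm) : Prop :=
  ∃ m₁, ParentSplit ι m Ij.1.x m₁ ∧ ∃ z', SplitCopy ι m₁ Ij.1 Ij.2 z' m'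

/-- cow(E ⊢ (t,S,R), S₁): copy-on-write unfolding of all the compartments
occurring in the reactant population. -/
inductive CowRel (ι : Name → ℝ≥0∞) : MachTerm → List (Species × ℕ) → MachTerm → Prop
  | nil {m} : CowRel ι m [] m
  | cons {m Ij l m' m''} :
      CowStep ι m Ij m' → CowRel ι m' l m'' → CowRel ι m ((Ij.1, Ij.2) :: l) m''

/-- Apply a node-name substitution. -/
def rn : Option (NName × NName) → NName → NName
  | none, z => z
  | some (w, x), z => if z = w then x else z

def renSpecies (f : Option (NName × NName)) (I : Species) : Species :=
  ⟨I.C, rn f I.x, rn f I.y⟩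

noncomputable def renPop (f : Option (NName × NName)) (S : Population) : Population :=
  Finsupp.mapDomain (renSpecies f) S

noncomputable def renReaction (f : Option (NName × NName)) (O : Reaction) : Reaction :=
  ⟨renPop f O.reac, O.rate, O.upd, renPop f O.prod⟩

noncomputable def renRMap (f : Option (NName × NName)) (R : RMap) : RMap :=
  R.map fun p => (renReaction f p.1, p.2)

/-- Apply the global update function f of a reaction to a machine term. -/
noncomputable def applyUpd (f : Option (NName × NName)) (m : MachTerm) : MachTerm :=
  ⟨m.env.image (rn f), m.time, renPop f m.pop, renRMap f m.rxns⟩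

/-- The transition relation T →^{a,O} T' of the COWGSAM (with the Next Reaction
method and the identity normalization function). -/
inductive MachStep (ι : Name → ℝ≥0∞) : MachTerm → ℝ≥0∞ → Reaction → MachTerm → Prop
  | mk {m : MachTerm} {O : Reaction} {a : ℝ≥0∞} {t' : ℝ} {mc : MachTerm} {st₁ st₂ : MState} :
      (O, (t', a)) ∈ m.rxns →
      (∀ p ∈ m.rxns, t' ≤ p.2.1) →
      CowRel ι m (popToList O.reac) mc →
      OMinusStar (popToList O.reac) (t', mc.pop, mc.rxns) st₁ →
      OPlusStar ι mc.env (popToList O.prod) st₁ st₂ →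
      MachStep ι m a O
        (applyUpd O.upd ⟨mc.env ∪ pfnPop O.prod, st₂.1, st₂.2.1, st₂.2.2⟩)

/-- The initial machine term ⟦P⟧_x = fn(J) ⊢ J ⊕ (0, ∅, ∅), J = species_{∅,x}(P). -/
def InitMach (ι : Name → ℝ≥0∞) (x : NName) (P : System) (m : MachTerm) : Prop :=
  ∃ (J : Population) (st : MState),
    SpeciesOfSys x P J ∧
    OPlusStar ι (pfnPop J) (popToList J) (0, 0, []) st ∧
    m = ⟨pfnPop J, st.1, st.2.1, st.2.2⟩

end Brane

namespace Brane

/-! Induction on the system. The only nontrivial case is parallel composition, where two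
normal forms are merged by inserting the top-level cells of one into the other: a cell
congruent to an existing top-level cell adds its multiplicity to that cell, any other cell
is appended. This keeps the top-level cells pairwise non-congruent, and the unfolding only
changes by reordering parallel components. -/

theorem SCong.comp_congr {P P' Q Q' : System} (hP : SCong P P') (hQ : SCong Q Q') :
    SCong (.comp P Q) (.comp P' Q') :=
  (SCong.comp Q hP).trans <| (SCong.compComm P' Q).trans <|
    (SCong.comp P' hQ).trans (SCong.compComm Q' P')

theorem SCong.prependCopies_congr {C C' R R' : System} (n : ℕ) (hC : SCong C C')
    (hR : SCong R R') : SCong (prependCopies n C R) (prependCopies n C' R') := by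
  induction n with
  | zero => exact hR
  | succ n ih => exact hC.comp_congr ih

theorem prependCopies_add (n m : ℕ) (C R : System) :
    prependCopies (n + m) C R = prependCopies n C (prependCopies m C R) := by
  induction n with
  | zero => simp [prependCopies]
  | succ n ih => simp [prependCopies, Nat.succ_add, ih]

theorem SCong.comp_prependCopies (n : ℕ) (A C R : System) :
    SCong (.comp A (prependCopies n C R)) (prependCopies n C (.comp A R)) := by
  induction n with
  | zero => exact .refl _
  | succ n ih =>
    have swap_head : SCong (.comp A (.comp C (prependCopies n C R)))
        (.comp C (.comp A (prependCopies n C R))) :=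
      (SCong.compAssoc A C _).trans <|
        (SCong.comp _ (SCong.compComm A C)).trans (SCong.compAssoc C A _).symm
    exact swap_head.trans ((SCong.refl C).comp_congr ih)

theorem SCong.prependCopies_comm (m n : ℕ) (A C R : System) :
    SCong (prependCopies m A (prependCopies n C R)) (prependCopies n C (prependCopies m A R)) := by
  induction m with
  | zero => exact .refl _
  | succ m ih => exact ((SCong.refl A).comp_congr ih).trans (SCong.comp_prependCopies n A C _)

theorem SCong.prependCopies_comp (n : ℕ) (C X Y : System) :
    SCong (prependCopies n C (.comp X Y)) (.comp (prependCopies n C X) Y) := by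
  induction n with
  | zero => exact .refl _
  | succ n ih => exact ((SCong.refl C).comp_congr ih).trans (SCong.compAssoc _ _ _)

namespace NF

open Classical in
noncomputable def insertCell (n : ℕ) (σ : Membrane) (Q : NF) : NF → NF
  | nil => cons n σ Q nil
  | cons m τ R₁ R₂ =>
      if SCong (.cell σ Q.unfold) (.cell τ R₁.unfold) then cons (n + m) τ R₁ R₂
      else cons m τ R₁ (insertCell n σ Q R₂)

noncomputable def merge : NF → NF → NF
  | nil, R => R
  | cons n σ Q₁ Q₂, R => insertCell n σ Q₁ (merge Q₂ R)

theorem mem_cellsList_insertCell {n : ℕ} {σ : Membrane} {Q R : NF} {p : Membrane × NF}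
    (hp : p ∈ (insertCell n σ Q R).cellsList) : p = (σ, Q) ∨ p ∈ R.cellsList := by
  induction R with
  | nil => simpa [insertCell, cellsList] using hp
  | cons m τ R₁ R₂ _ ih =>
    by_cases h : SCong (.cell σ Q.unfold) (.cell τ R₁.unfold)
    · simp only [insertCell, if_pos h] at hp
      exact .inr hp
    · simp only [insertCell, if_neg h, cellsList, List.mem_cons] at hp ⊢
      rcases hp with hp | hp
      · exact .inr (.inl hp)
      · exact (ih hp).imp_right .inr

theorem Good.insertCell {n : ℕ} {σ : Membrane} {Q R : NF} (hn : 0 < n) (hQ : Good Q)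
    (hR : Good R) : Good (insertCell n σ Q R) := by
  induction R with
  | nil => exact .cons hn hQ .nil (by simp [cellsList])
  | cons m τ R₁ R₂ _ ih =>
    obtain _ | ⟨hm, hR₁, hR₂, hdistinct⟩ := hR
    by_cases h : SCong (.cell σ Q.unfold) (.cell τ R₁.unfold)
    · simpa only [NF.insertCell, if_pos h] using
        Good.cons (Nat.lt_add_left n hm) hR₁ hR₂ hdistinct
    · simp only [NF.insertCell, if_neg h]
      refine .cons hm hR₁ (ih hR₂) fun p hp => ?_
      rcases mem_cellsList_insertCell hp with rfl | hp
      · exact fun hc => h hc.symm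
      · exact hdistinct p hp

theorem unfold_insertCell (n : ℕ) (σ : Membrane) (Q R : NF) :
    SCong (insertCell n σ Q R).unfold (prependCopies n (.cell σ Q.unfold) R.unfold) := by
  induction R with
  | nil => exact .refl _
  | cons m τ R₁ R₂ _ ih =>
    by_cases h : SCong (.cell σ Q.unfold) (.cell τ R₁.unfold)
    · simp only [NF.insertCell, if_pos h, unfold, prependCopies_add]
      exact SCong.prependCopies_congr n h.symm (.refl _)
    · simp only [NF.insertCell, if_neg h, unfold]
      exact (SCong.prependCopies_congr m (.refl _) ih).trans (SCong.prependCopies_comm m n _ _ _)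

theorem Good.merge {Q R : NF} (hQ : Good Q) (hR : Good R) : Good (Q.merge R) := by
  induction Q with
  | nil => exact hR
  | cons n σ Q₁ Q₂ _ ih =>
    obtain _ | ⟨hn, hQ₁, hQ₂, -⟩ := hQ
    exact hQ₁.insertCell hn (ih hQ₂)

theorem unfold_merge (Q R : NF) : SCong (Q.merge R).unfold (.comp Q.unfold R.unfold) := by
  induction Q with
  | nil => exact (SCong.compVoid R.unfold).symm.trans (SCong.compComm R.unfold .void)
  | cons n σ Q₁ Q₂ _ ih =>
    exact (unfold_insertCell n σ Q₁ (Q₂.merge R)).trans <|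
      (SCong.prependCopies_congr n (.refl _) ih).trans (SCong.prependCopies_comp n _ _ _)

theorem Good.single (σ : Membrane) {Q : NF} (hQ : Good Q) : Good (.cons 1 σ Q .nil) :=
  .cons Nat.one_pos hQ .nil (by simp [cellsList])

theorem unfold_single (σ : Membrane) (Q : NF) :
    SCong (cons 1 σ Q nil).unfold (.cell σ Q.unfold) :=
  SCong.compVoid _

end NF

/-- every Brane Calculus system admits a normal form: there is a
well-formed normal form Q whose unfolding ⌈Q⌉ is structurally congruent to P. -/
theorem normal_form_exists (P : System) :
    ∃ Q : NF, NF.Good Q ∧ SCong Q.unfold P := by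
  induction P with
  | void => exact ⟨.nil, .nil, .refl _⟩
  | comp P₁ P₂ ih₁ ih₂ =>
    obtain ⟨Q₁, hQ₁, hP₁⟩ := ih₁
    obtain ⟨Q₂, hQ₂, hP₂⟩ := ih₂
    exact ⟨Q₁.merge Q₂, hQ₁.merge hQ₂, (NF.unfold_merge Q₁ Q₂).trans (hP₁.comp_congr hP₂)⟩
  | cell σ P ih =>
    obtain ⟨Q, hQ, hP⟩ := ih
    exact ⟨.cons 1 σ Q .nil, NF.Good.single σ hQ,
      (NF.unfold_single σ Q).trans (.cell (.refl σ) hP)⟩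

end Brane
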